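/- arXiv:1601.01380 — 2 statements merged into one kernel-verified Lean document; each statement's English description precedes it below -/
import Mathlib

section
/- The Segal–Bargmann transform U(f)(z) = (2π)^{−1/2} ∫_ℝ e^{−(z−x)²/2} f(x) dx maps each f ∈ L²(ℝ) to an entire holomorphic function on ℂ. -/
open MeasureTheory Complex Metric

/-- Norm of the complexified Gaussian kernel. -/
lemma norm_gauss_kernel (z : ℂ) (x : ℝ) :
    ‖Complex.exp (-(z - x) ^ 2 / 2)‖ = Real.exp ((z.im ^ 2 - (z.re - x) ^ 2) / 2) := by
  rw [Complex.norm_exp]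
  congr 1
  have : (-(z - (x : ℂ)) ^ 2 / 2) = (-(z - (x : ℂ)) ^ 2) * (2⁻¹ : ℝ) := by
    push_cast; ring
  rw [this, Complex.mul_re]
  simp [pow_two, Complex.mul_re, Complex.sub_re, Complex.sub_im, Complex.ofReal_re,
    Complex.ofReal_im]
  ring

/-- `(1+|x|) e^{-b (x-r)^2}` is in `L²`. -/
lemma polyGauss_memLp {b : ℝ} (hb : 0 < b) (r : ℝ) :
    MemLp (fun x : ℝ => (1 + |x|) * Real.exp (-(b * (x - r) ^ 2))) 2 volume := by
  have hcont : Continuous fun x : ℝ => (1 + |x|) * Real.exp (-(b * (x - r) ^ 2)) := by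
    fun_prop
  rw [memLp_two_iff_integrable_sq hcont.aestronglyMeasurable]
  have h2b : 0 < 2 * b := by linarith
  have hint : Integrable (fun x : ℝ =>
      (2 + 4 * r ^ 2) * Real.exp (-(2 * b) * x ^ 2) + 4 * (x ^ 2 * Real.exp (-(2 * b) * x ^ 2)))
      volume := by
    have h1 := (integrable_exp_neg_mul_sq h2b).const_mul (2 + 4 * r ^ 2)
    have h2 : Integrable (fun x : ℝ => x ^ 2 * Real.exp (-(2 * b) * x ^ 2)) volume := by
      have := integrable_rpow_mul_exp_neg_mul_sq h2b (s := 2) (by norm_num)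
      refine this.congr ?_
      filter_upwards with x
      rw [Real.rpow_two]
    exact h1.add (h2.const_mul 4)
  have hint' := hint.comp_sub_right r
  refine hint'.mono' ?_ ?_
  · exact (hcont.pow 2).aestronglyMeasurable
  · filter_upwards with x
    have e1 : ((1 + |x|) * Real.exp (-(b * (x - r) ^ 2))) ^ 2
        = (1 + |x|) ^ 2 * Real.exp (-(2 * b) * (x - r) ^ 2) := by
      rw [mul_pow, ← Real.exp_nat_mul]
      ring_nf
    rw [Real.norm_eq_abs, _root_.abs_of_nonneg (by positivity), e1]
    have e2 : (1 + |x|) ^ 2 ≤ (2 + 4 * r ^ 2) + 4 * (x - r) ^ 2 := by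
      have hx : |x| ^ 2 = x ^ 2 := sq_abs x
      nlinarith [abs_nonneg x, sq_nonneg (x - r), sq_nonneg (|x| - 1), sq_nonneg (x - 2 * r)]
    calc (1 + |x|) ^ 2 * Real.exp (-(2 * b) * (x - r) ^ 2)
        ≤ ((2 + 4 * r ^ 2) + 4 * (x - r) ^ 2) * Real.exp (-(2 * b) * (x - r) ^ 2) := by
          exact mul_le_mul_of_nonneg_right e2 (Real.exp_pos _).le
      _ = (2 + 4 * r ^ 2) * Real.exp (-(2 * b) * (x - r) ^ 2)
            + 4 * ((x - r) ^ 2 * Real.exp (-(2 * b) * (x - r) ^ 2)) := by ring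

/-- Helper: a real `L²` weight times an `L²` function is integrable. -/
lemma l2_mul_integrable {E : Type*} [NormedAddCommGroup E] {g : ℝ → ℝ} {f : ℝ → ℂ}
    (hg : MemLp g 2 (volume : Measure ℝ))
    (hf : MemLp f 2 (volume : Measure ℝ)) (h : ℝ → E)
    (hmeas : AEStronglyMeasurable h (volume : Measure ℝ))
    (hbound : ∀ x, ‖h x‖ ≤ g x * ‖f x‖) : Integrable h volume := by
  have : MemLp (g • fun x => ‖f x‖) 1 (volume : Measure ℝ) := by
    refine MemLp.smul (hpqr := ⟨?_⟩) hf.norm hg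
    rw [inv_one, ENNReal.inv_two_add_inv_two]
  have hint : Integrable (fun x => g x * ‖f x‖) volume := by
    have := memLp_one_iff_integrable.mp this
    simpa [Pi.smul_apply, smul_eq_mul, Pi.mul_def] using this
  exact hint.mono' hmeas (Filter.Eventually.of_forall hbound)

/-- The Segal–Bargmann transform `U(f)(z) = (2π)^{-1/2} ∫ e^{-(z-x)²/2} f(x) dx` of an
`L²` function on `ℝ` converges for every `z ∈ ℂ` and is an entire holomorphic function. -/
theorem segalBargmann_entire (f : ℝ → ℂ) (hf : MemLp f 2 (volume : Measure ℝ)) :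
    (∀ z : ℂ, Integrable (fun x : ℝ => Complex.exp (-(z - x) ^ 2 / 2) * f x) volume)
      ∧ Differentiable ℂ (fun z : ℂ =>
          (1 / Real.sqrt (2 * Real.pi) : ℂ)
            * ∫ x : ℝ, Complex.exp (-(z - x) ^ 2 / 2) * f x) := by
  -- measurability of integrands
  have hmeas : ∀ z : ℂ, AEStronglyMeasurable
      (fun x : ℝ => Complex.exp (-(z - x) ^ 2 / 2) * f x) volume := by
    intro z
    exact (Continuous.aestronglyMeasurable (by fun_prop)).mul hf.aestronglyMeasurable
  -- Integrability at every z
  have hInt : ∀ z : ℂ, Integrable (fun x : ℝ => Complex.exp (-(z - x) ^ 2 / 2) * f x) volume := by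
    intro z
    refine l2_mul_integrable
      ((polyGauss_memLp (by norm_num : (0:ℝ) < 1/2) z.re).const_mul
        (Real.exp (z.im ^ 2 / 2))) hf _ (hmeas z) ?_
    intro x
    rw [norm_mul, norm_gauss_kernel]
    apply mul_le_mul_of_nonneg_right _ (norm_nonneg _)
    have e : (z.im ^ 2 - (z.re - x) ^ 2) / 2
        = z.im ^ 2 / 2 + -(1/2 * (x - z.re) ^ 2) := by ring
    rw [e, Real.exp_add]
    have h2 := Real.exp_pos (-(1/2 * (x - z.re) ^ 2))
    have h3 := Real.exp_pos (z.im ^ 2 / 2)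
    nlinarith [mul_nonneg (mul_pos h3 h2).le (abs_nonneg x)]
  refine ⟨hInt, ?_⟩
  -- Differentiability
  intro z₀
  set C : ℝ := (‖z₀‖ + 1) * Real.exp (1/2 + (|z₀.im| + 1) ^ 2 / 2) with hC
  have hCpos : 0 < C := by positivity
  set bound : ℝ → ℝ := fun x =>
    (C * ((1 + |x|) * Real.exp (-(1/4 * (x - z₀.re) ^ 2)))) * ‖f x‖ with hbd
  have key := hasDerivAt_integral_of_dominated_loc_of_deriv_le (μ := volume)
    (F := fun z : ℂ => fun x : ℝ => Complex.exp (-(z - x) ^ 2 / 2) * f x)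
    (F' := fun z : ℂ => fun x : ℝ => (-(z - x)) * Complex.exp (-(z - x) ^ 2 / 2) * f x)
    (x₀ := z₀) (bound := bound) (s := ball z₀ 1) (ball_mem_nhds z₀ one_pos)
    (Filter.Eventually.of_forall hmeas) (hInt z₀)
    ((Continuous.aestronglyMeasurable (by fun_prop)).mul hf.aestronglyMeasurable)
    ?_ ?_ ?_
  · exact (key.2.const_mul (1 / Real.sqrt (2 * Real.pi) : ℂ)).differentiableAt
  · -- the bound
    filter_upwards with x z hz
    rw [mem_ball] at hz
    have hz' : ‖z - z₀‖ ≤ 1 := by rw [← dist_eq_norm]; exact hz.le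
    rw [norm_mul, norm_mul, norm_gauss_kernel]
    have hzx : ‖-(z - (x:ℂ))‖ ≤ (‖z₀‖ + 1) * (1 + |x|) := by
      rw [norm_neg]
      calc ‖z - (x:ℂ)‖ ≤ ‖z - z₀‖ + ‖z₀‖ + ‖(x:ℂ)‖ := by
            have := norm_add_le (z - z₀) (z₀ - x)
            have h2 := norm_sub_le z₀ (x:ℂ)
            calc ‖z - (x:ℂ)‖ = ‖(z - z₀) + (z₀ - x)‖ := by ring_nf
              _ ≤ ‖z - z₀‖ + ‖z₀ - (x:ℂ)‖ := norm_add_le _ _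
              _ ≤ ‖z - z₀‖ + (‖z₀‖ + ‖(x:ℂ)‖) := by linarith
              _ = ‖z - z₀‖ + ‖z₀‖ + ‖(x:ℂ)‖ := by ring
        _ ≤ 1 + ‖z₀‖ + |x| := by
            rw [Complex.norm_real, Real.norm_eq_abs]; linarith
        _ ≤ (‖z₀‖ + 1) * (1 + |x|) := by nlinarith [abs_nonneg x, norm_nonneg z₀]
    have him : |z.im| ≤ |z₀.im| + 1 := by
      have h1 : |z.im - z₀.im| ≤ ‖z - z₀‖ := by
        have := Complex.abs_im_le_norm (z - z₀)
        simpa [Complex.sub_im] using this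
      calc |z.im| ≤ |z₀.im| + |z.im - z₀.im| := by
            have := abs_sub_abs_le_abs_sub z.im z₀.im
            have := abs_add_le z₀.im (z.im - z₀.im)
            calc |z.im| = |z₀.im + (z.im - z₀.im)| := by ring_nf
              _ ≤ |z₀.im| + |z.im - z₀.im| := abs_add_le _ _
        _ ≤ |z₀.im| + 1 := by linarith [h1.trans hz']
    have hre : |z.re - z₀.re| ≤ 1 := by
      have h1 : |z.re - z₀.re| ≤ ‖z - z₀‖ := by
        have := Complex.abs_re_le_norm (z - z₀)
        simpa [Complex.sub_re] using this
      linarith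
    have hexp : Real.exp ((z.im ^ 2 - (z.re - x) ^ 2) / 2)
        ≤ Real.exp (1/2 + (|z₀.im| + 1) ^ 2 / 2) * Real.exp (-(1/4 * (x - z₀.re) ^ 2)) := by
      rw [← Real.exp_add]
      apply Real.exp_le_exp.mpr
      have h1 : z.im ^ 2 ≤ (|z₀.im| + 1) ^ 2 := by
        have := _root_.sq_abs z.im
        nlinarith [abs_nonneg z.im, abs_nonneg z₀.im]
      have h2 : (x - z₀.re) ^ 2 ≤ 2 * (z.re - x) ^ 2 + 2 * (z.re - z₀.re) ^ 2 := by
        nlinarith [sq_nonneg (x - 2 * z.re + z₀.re)]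
      have h3 : (z.re - z₀.re) ^ 2 ≤ 1 := by
        have := _root_.sq_abs (z.re - z₀.re)
        nlinarith [abs_nonneg (z.re - z₀.re)]
      nlinarith
    calc ‖-(z - (x:ℂ))‖ * Real.exp ((z.im ^ 2 - (z.re - x) ^ 2) / 2) * ‖f x‖
        ≤ ((‖z₀‖ + 1) * (1 + |x|))
            * (Real.exp (1/2 + (|z₀.im| + 1) ^ 2 / 2) * Real.exp (-(1/4 * (x - z₀.re) ^ 2)))
            * ‖f x‖ := by
          apply mul_le_mul_of_nonneg_right _ (norm_nonneg _)
          exact mul_le_mul hzx hexp (Real.exp_pos _).le (by positivity)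
      _ = bound x := by rw [hbd, hC]; ring
  · -- bound is integrable
    refine l2_mul_integrable
      ((polyGauss_memLp (by norm_num : (0:ℝ) < 1/4) z₀.re).const_mul C) hf bound ?_ ?_
    · exact (Continuous.aestronglyMeasurable (by fun_prop : Continuous fun x : ℝ =>
        C * ((1 + |x|) * Real.exp (-(1/4 * (x - z₀.re) ^ 2))))).mul
        hf.aestronglyMeasurable.norm
    · intro x
      have h0 : (0:ℝ) ≤ C * ((1 + |x|) * Real.exp (-(1/4 * (x - z₀.re) ^ 2))) * ‖f x‖ := by
        positivity
      simp only [hbd, Real.norm_eq_abs]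
      rw [_root_.abs_of_nonneg h0]
  · -- differentiability of the integrand
    filter_upwards with x z _
    have h1 : HasDerivAt (fun z : ℂ => -(z - x) ^ 2 / 2) (-(z - x)) z := by
      have h0 : HasDerivAt (fun z : ℂ => z - x) 1 z := (hasDerivAt_id z).sub_const _
      have h2 := (h0.pow 2).neg.div_const 2
      refine h2.congr_deriv ?_
      simp
      ring
    have h3 := (h1.cexp).mul_const (f x)
    refine h3.congr_deriv ?_
    ring
end

section
/- For f in the Schwartz space with Fourier representation f(x₀) = (2π)^{−1/2} ∫_ℝ e^{ipx₀} f̂(p) dp, the Segal–Bargmann transform satisfies U(f)(z) = (2π)^{−1/2} ∫_ℝ e^{−p²/2} e^{ipz} f̂(p) dp for all z ∈ ℂ. -/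
open MeasureTheory Complex

set_option maxHeartbeats 1000000

/-- For a Schwartz function `f` with Fourier representation
`f(x₀) = (2π)^{-1/2} ∫ e^{ipx₀} f̂(p) dp`, the Segal–Bargmann transform satisfies
`U(f)(z) = (2π)^{-1/2} ∫ e^{-p²/2} e^{ipz} f̂(p) dp` for every `z ∈ ℂ`. -/
theorem segalBargmann_fourier (f : SchwartzMap ℝ ℂ) (g : ℝ → ℂ)
    (hg : Integrable g volume)
    (hfourier : ∀ x₀ : ℝ, f x₀ =
      (1 / Real.sqrt (2 * Real.pi) : ℂ) * ∫ p : ℝ, Complex.exp (I * p * x₀) * g p) :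
    ∀ z : ℂ,
      (1 / Real.sqrt (2 * Real.pi) : ℂ) * ∫ x : ℝ, Complex.exp (-(z - x) ^ 2 / 2) * f x
        = (1 / Real.sqrt (2 * Real.pi) : ℂ)
            * ∫ p : ℝ, Complex.exp (-(p : ℂ) ^ 2 / 2) * Complex.exp (I * p * z) * g p := by
  intro z
  set c : ℂ := (1 / Real.sqrt (2 * Real.pi) : ℂ) with hc
  have hb : (-(1/2) : ℂ).re < 0 := by norm_num
  -- integrability of the Gaussian factor
  have hGauss : Integrable (fun x : ℝ ↦ Complex.exp (-(z - x) ^ 2 / 2)) := by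
    have := integrable_cexp_quadratic' hb z (-(z ^ 2) / 2)
    refine this.congr (Filter.Eventually.of_forall fun x ↦ ?_)
    exact congrArg Complex.exp (by ring)
  -- integrability on the product space
  have hprod : Integrable (Function.uncurry fun (x p : ℝ) ↦
      Complex.exp (-(z - x) ^ 2 / 2) * (Complex.exp (I * p * x) * g p))
      (volume.prod volume) := by
    have hbase : Integrable (fun q : ℝ × ℝ ↦
        Complex.exp (-(z - q.1) ^ 2 / 2) * g q.2) (volume.prod volume) :=
      hGauss.mul_prod hg
    have hphase : AEStronglyMeasurable (fun q : ℝ × ℝ ↦ Complex.exp (I * q.2 * q.1))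
        (volume.prod volume) := by
      apply Continuous.aestronglyMeasurable
      continuity
    have := hbase.bdd_mul hphase (c := 1) (Filter.Eventually.of_forall fun q ↦ by
      have hre : (I * (q.2 : ℂ) * (q.1 : ℂ)).re = 0 := by simp
      rw [Complex.norm_exp, hre, Real.exp_zero])
    refine this.congr (Filter.Eventually.of_forall fun q ↦ ?_)
    simp only [Function.uncurry]
    ring
  -- the inner Gaussian integral
  have hinner : ∀ p : ℝ, (∫ x : ℝ, Complex.exp (-(z - x) ^ 2 / 2) * Complex.exp (I * p * x))
      = (Real.sqrt (2 * Real.pi) : ℂ) * (Complex.exp (-(p : ℂ) ^ 2 / 2) * Complex.exp (I * p * z)) := by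
    intro p
    have h1 : ∀ x : ℝ, Complex.exp (-(z - x) ^ 2 / 2) * Complex.exp (I * p * x)
        = Complex.exp ((-(1/2)) * (x:ℂ) ^ 2 + (z + I * p) * x + (-(z ^ 2) / 2)) := by
      intro x
      rw [← Complex.exp_add]
      exact congrArg Complex.exp (by ring)
    simp_rw [h1]
    rw [integral_cexp_quadratic hb]
    have hpow : ((Real.pi : ℂ) / -(-(1/2))) ^ (1 / 2 : ℂ) = (Real.sqrt (2 * Real.pi) : ℂ) := by
      have h2 : ((Real.pi : ℂ) / -(-(1/2))) = ((2 * Real.pi : ℝ) : ℂ) := by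
        push_cast; ring
      rw [h2, show (1 / 2 : ℂ) = ((1 / 2 : ℝ) : ℂ) by norm_num,
        ← Complex.ofReal_cpow (by positivity)]
      norm_num [Real.sqrt_eq_rpow]
    rw [hpow, ← Complex.exp_add]
    refine congrArg _ (congrArg Complex.exp ?_)
    have hI2 : (I : ℂ) ^ 2 = -1 := Complex.I_sq
    field_simp
    linear_combination (4 * (p:ℂ) ^ 2) * hI2
  -- main computation
  have hsqrt_pos : (0:ℝ) < Real.sqrt (2 * Real.pi) := Real.sqrt_pos.mpr (by positivity)
  have hsqrt_ne : ((Real.sqrt (2 * Real.pi) : ℝ) : ℂ) ≠ 0 := by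
    exact_mod_cast hsqrt_pos.ne'
  have hcsqrt : c * (Real.sqrt (2 * Real.pi) : ℂ) = 1 := by
    rw [hc, one_div_mul_cancel hsqrt_ne]
  calc c * ∫ x : ℝ, Complex.exp (-(z - x) ^ 2 / 2) * f x
      = c * ∫ x : ℝ, Complex.exp (-(z - x) ^ 2 / 2)
          * (c * ∫ p : ℝ, Complex.exp (I * p * x) * g p) := by
        congr 1
        refine integral_congr_ae (Filter.Eventually.of_forall fun x ↦ ?_)
        beta_reduce
        rw [hfourier x]
    _ = c * (c * ∫ x : ℝ, ∫ p : ℝ,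
          Complex.exp (-(z - x) ^ 2 / 2) * (Complex.exp (I * p * x) * g p)) := by
        congr 1
        rw [← integral_const_mul]
        refine integral_congr_ae (Filter.Eventually.of_forall fun x ↦ ?_)
        beta_reduce
        calc Complex.exp (-(z - x) ^ 2 / 2) * (c * ∫ p : ℝ, Complex.exp (I * p * x) * g p)
            = c * (Complex.exp (-(z - x) ^ 2 / 2) * ∫ p : ℝ, Complex.exp (I * p * x) * g p) := by
              ring
          _ = c * ∫ p : ℝ, Complex.exp (-(z - x) ^ 2 / 2) * (Complex.exp (I * p * x) * g p) := by
              rw [integral_const_mul]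
    _ = c * (c * ∫ p : ℝ, ∫ x : ℝ,
          Complex.exp (-(z - x) ^ 2 / 2) * (Complex.exp (I * p * x) * g p)) := by
        rw [integral_integral_swap hprod]
    _ = c * (c * ∫ p : ℝ, (Real.sqrt (2 * Real.pi) : ℂ)
          * (Complex.exp (-(p : ℂ) ^ 2 / 2) * Complex.exp (I * p * z) * g p)) := by
        congr 2
        refine integral_congr_ae (Filter.Eventually.of_forall fun p ↦ ?_)
        beta_reduce
        calc (∫ x : ℝ, Complex.exp (-(z - x) ^ 2 / 2) * (Complex.exp (I * p * x) * g p))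
            = (∫ x : ℝ, Complex.exp (-(z - x) ^ 2 / 2) * Complex.exp (I * p * x)) * g p := by
              rw [← integral_mul_const]
              refine integral_congr_ae (Filter.Eventually.of_forall fun x ↦ ?_)
              beta_reduce
              ring
          _ = (Real.sqrt (2 * Real.pi) : ℂ)
              * (Complex.exp (-(p : ℂ) ^ 2 / 2) * Complex.exp (I * p * z) * g p) := by
              rw [hinner p]; ring
    _ = c * ∫ p : ℝ, Complex.exp (-(p : ℂ) ^ 2 / 2) * Complex.exp (I * p * z) * g p := by
        rw [integral_const_mul, ← mul_assoc, ← mul_assoc,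
          show c * c * (Real.sqrt (2 * Real.pi) : ℂ) = c by rw [mul_assoc, hcsqrt, mul_one]]
end
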